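/- arXiv:2403.16625 — 2 statements merged into one kernel-verified Lean document; each statement's English description precedes it below -/
import Mathlib

section
/- Let E be a rank-r free module over a commutative ring R and φ : E → E an endomorphism. Then for all e_1,…,e_r ∈ E, the sum over i of e_1 ∧ … ∧ φ(e_i) ∧ … ∧ e_r equals tr(φ)·(e_1 ∧ … ∧ e_r) in ∧^r E. -/
/-!
Both sides are alternating in `v`: when `v i = v j` only the `i`-th and `j`-th summands on the
left survive, and they differ by the transposition of `i` and `j`. An alternating map in top
degree is determined by its value on a basis `b`, and there, writing `φ (b i)` in the basis `b`,
only its `i`-th coordinate survives in the `i`-th summand; these coordinates add up to the trace.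
-/

open Function

theorem Equiv.comp_swap_eq_self {α β : Type*} [DecidableEq α] {v : α → β} {i j : α}
    (h : v i = v j) : v ∘ Equiv.swap i j = v := by
  rw [Equiv.comp_swap_eq_update, h, update_eq_self, ← h, update_eq_self]

theorem LinearMap.trace_eq_sum_repr {R M ι : Type*} [CommSemiring R] [AddCommMonoid M]
    [Module R M] [Fintype ι] [DecidableEq ι] (b : Module.Basis ι R M) (φ : M →ₗ[R] M) :
    LinearMap.trace R M φ = ∑ i, b.repr (φ (b i)) i := by
  simp [LinearMap.trace_eq_matrix_trace R b, Matrix.trace, LinearMap.toMatrix_apply]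

theorem MultilinearMap.compLinearMap_update_id_apply {R ι N : Type*} {M : ι → Type*}
    [CommSemiring R] [∀ i, AddCommMonoid (M i)] [∀ i, Module R (M i)] [AddCommMonoid N]
    [Module R N] [DecidableEq ι] (f : MultilinearMap R M N) (k : ι) (φ : M k →ₗ[R] M k)
    (v : ∀ i, M i) :
    f.compLinearMap (update (fun _ ↦ LinearMap.id) k φ) v = f (update v k (φ (v k))) := by
  rw [compLinearMap_apply]
  congr 1; funext l
  rcases eq_or_ne l k with rfl | hl <;> simp [*]

namespace AlternatingMap

variable {R M N ι : Type*} [CommSemiring R] [AddCommMonoid M] [Module R M]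
  [AddCommMonoid N] [Module R N] [Fintype ι] [DecidableEq ι]

def sumUpdate (f : M [⋀^ι]→ₗ[R] N) (φ : M →ₗ[R] M) : M [⋀^ι]→ₗ[R] N where
  toMultilinearMap := ∑ i, f.toMultilinearMap.compLinearMap (update (fun _ ↦ LinearMap.id) i φ)
  map_eq_zero_of_eq' v i j hv hij := by
    simp only [MultilinearMap.toFun_eq_coe, FunLike.coe_sum, Finset.sum_apply,
      MultilinearMap.compLinearMap_update_id_apply, coe_multilinearMap]
    rw [Fintype.sum_eq_add i j hij]
    · have hswap : update v i (φ (v i)) ∘ Equiv.swap i j = update v j (φ (v j)) := by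
        rw [update_comp_equiv, Equiv.comp_swap_eq_self hv, Equiv.symm_swap,
          Equiv.swap_apply_left, hv]
      rw [← hswap, f.map_add_swap _ hij]
    · rintro k ⟨hki, hkj⟩
      exact f.map_eq_zero_of_eq _ (by simp [hki.symm, hkj.symm, hv]) hij

theorem sumUpdate_apply (f : M [⋀^ι]→ₗ[R] N) (φ : M →ₗ[R] M) (v : ι → M) :
    f.sumUpdate φ v = ∑ i, f (update v i (φ (v i))) := by
  change (∑ i, f.toMultilinearMap.compLinearMap (update (fun _ ↦ LinearMap.id) i φ)) v = _
  simp only [FunLike.coe_sum, Finset.sum_apply, MultilinearMap.compLinearMap_update_id_apply,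
    coe_multilinearMap]

theorem map_update_basis (f : M [⋀^ι]→ₗ[R] N) (b : Module.Basis ι R M) (i : ι) (x : M) :
    f (update b i x) = b.repr x i • f b := by
  conv_lhs => rw [← b.sum_repr x]
  rw [f.map_update_sum, Fintype.sum_eq_single i]
  · rw [f.map_update_smul, update_eq_self]
  · intro k hki
    rw [f.map_update_smul, f.map_update_self _ hki.symm, smul_zero]

theorem sumUpdate_basis (f : M [⋀^ι]→ₗ[R] N) (φ : M →ₗ[R] M) (b : Module.Basis ι R M) :
    f.sumUpdate φ b = LinearMap.trace R M φ • f b := by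
  simp only [sumUpdate_apply, map_update_basis, LinearMap.trace_eq_sum_repr b, Finset.sum_smul]

variable {N' : Type*} [AddCommGroup N'] [Module R N']

theorem ext_basis {f g : M [⋀^ι]→ₗ[R] N'} (b : Module.Basis ι R M) (h : f b = g b) :
    f = g := by
  refine b.ext_alternating fun w hw ↦ ?_
  let σ : Equiv.Perm ι := Equiv.ofBijective w (Finite.injective_iff_bijective.1 hw)
  change f (b ∘ σ) = g (b ∘ σ)
  rw [f.map_perm, g.map_perm, h]

theorem sumUpdate_eq_trace_smul (f : M [⋀^ι]→ₗ[R] N') (φ : M →ₗ[R] M)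
    (b : Module.Basis ι R M) :
    f.sumUpdate φ = LinearMap.trace R M φ • f :=
  ext_basis b (sumUpdate_basis f φ b)

end AlternatingMap

/-- For a rank-`r` free module `E` over a commutative ring `R` and
`φ : E → E`, for all `e₁,…,e_r ∈ E` one has
`∑ i, e₁ ∧ … ∧ φ(e_i) ∧ … ∧ e_r = tr(φ) • (e₁ ∧ … ∧ e_r)` in `⋀^r E`
(computed inside the exterior algebra). -/
theorem stmt_3 (R : Type) [CommRing R] (E : Type) [AddCommGroup E] [Module R E]
    [Module.Free R E] [Module.Finite R E] (r : ℕ) (hr : Module.finrank R E = r)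
    (φ : E →ₗ[R] E) (v : Fin r → E) :
    ∑ i : Fin r, ExteriorAlgebra.ιMulti R r (Function.update v i (φ (v i)))
      = LinearMap.trace R E φ • ExteriorAlgebra.ιMulti R r v := by
  rcases subsingleton_or_nontrivial R with _ | _
  · have := Module.subsingleton R (ExteriorAlgebra R E)
    exact Subsingleton.elim _ _
  rw [← AlternatingMap.sumUpdate_apply,
    AlternatingMap.sumUpdate_eq_trace_smul _ φ (Module.finBasisOfFinrankEq R E hr),
    AlternatingMap.smul_apply]
end

section
/- Let E be a rank-2 free module over a commutative ring R, φ ∈ End(E), and α : E → E^* a skew map corresponding to α_1 ∧ α_2 ∈ ∧^2 E^* via [α_1∧α_2](e) = α_1(e)α_2 − α_2(e)α_1. Then the identity α∘φ + φ^*∘α = tr(φ)·α holds in Hom(E, E^*), equivalently α∘φ − (α∘φ)^* = tr(φ)·α. -/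
/-!
For an alternating form `B`, the defect `B (φ x) y + B x (φ y) - tr φ • B x y` is again
alternating, and on a free module of rank 2 an alternating form is determined by its value on
a basis pair `(e₀, e₁)`. There the defect vanishes, because `B (φ e₀) e₁` and `B e₀ (φ e₁)`
only see the diagonal entries of the matrix of `φ`.
-/

open Module

namespace LinearMap.IsAlt

variable {R M N : Type*} [CommRing R] [AddCommGroup M] [Module R M] [AddCommGroup N] [Module R N]
  {B : M →ₗ[R] M →ₗ[R] N}

theorem eq_zero_of_basis_fin_two (hB : B.IsAlt) (b : Basis (Fin 2) R M)
    (h : B (b 0) (b 1) = 0) : B = 0 := by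
  refine ext_basis b b <| Fin.forall_fin_two.2
    ⟨Fin.forall_fin_two.2 ⟨hB _, h⟩, Fin.forall_fin_two.2 ⟨?_, hB _⟩⟩
  rw [← hB.neg, h, neg_zero, zero_apply, zero_apply]

theorem comp_add_compl₂_sub_trace_smul (hB : B.IsAlt) (φ : M →ₗ[R] M) :
    (B ∘ₗ φ + B.compl₂ φ - trace R M φ • B).IsAlt := fun x => by
  simp [hB x, ← hB.neg x (φ x)]

theorem apply_add_apply_eq_trace_smul (hB : B.IsAlt) (b : Basis (Fin 2) R M)
    (φ : M →ₗ[R] M) (x y : M) :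
    B (φ x) y + B x (φ y) = trace R M φ • B x y := by
  have hφ : ∀ i, φ (b i) = b.repr (φ (b i)) 0 • b 0 + b.repr (φ (b i)) 1 • b 1 := fun i => by
    simpa only [Fin.sum_univ_two] using (b.sum_repr (φ (b i))).symm
  have htr : trace R M φ = b.repr (φ (b 0)) 0 + b.repr (φ (b 1)) 1 := by
    simp [trace_eq_matrix_trace R b, Matrix.trace_fin_two, toMatrix_apply]
  have hD := (hB.comp_add_compl₂_sub_trace_smul φ).eq_zero_of_basis_fin_two b <| by
    simp only [add_apply, sub_apply, comp_apply, compl₂_apply, smul_apply]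
    rw [hφ 0, hφ 1, htr]
    simp [hB (b 0), hB (b 1), add_smul]
  simpa [sub_eq_zero] using congr($hD x y)

end LinearMap.IsAlt

/-- For a rank-2 free module `E` over a commutative ring `R`, `φ ∈ End(E)`,
and the skew map `α : E → E^*` corresponding to `α₁ ∧ α₂ ∈ ∧² E^*` via
`[α₁∧α₂](e) = α₁(e)α₂ − α₂(e)α₁`, one has `α∘φ + φ^*∘α = tr(φ)·α` in `Hom(E,E^*)`. -/
theorem stmt_4 (R : Type) [CommRing R] (E : Type) [AddCommGroup E] [Module R E]
    [Module.Free R E] [Module.Finite R E] (hrk : Module.finrank R E = 2)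
    (φ : E →ₗ[R] E) (α₁ α₂ : Module.Dual R E)
    (α : E →ₗ[R] Module.Dual R E)
    (hα : ∀ e : E, α e = α₁ e • α₂ - α₂ e • α₁) :
    ∀ e : E, α (φ e) + φ.dualMap (α e) = LinearMap.trace R E φ • α e := by
  have : Nontrivial R := by
    by_contra hR
    have := not_nontrivial_iff_subsingleton.mp hR
    have := Module.subsingleton R E
    simp at hrk
  have hα_alt : α.IsAlt := fun e => by simp [hα, mul_comm]
  intro e
  ext e'
  exact hα_alt.apply_add_apply_eq_trace_smul (Module.finBasisOfFinrankEq R E hrk) φ e e'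
end
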